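/- Let U be a critical-point-free harmonic function on a domain Ω ⊆ ℝⁿ and ℓ a unit-speed integral curve of ∇U/‖∇U‖ defined on [0, T] with ℓ(0) = p₀. Then U(ℓ(T)) = U(p₀) + ‖∇U(p₀)‖ · ∫₀ᵀ exp((n−1) I(s)) ds, where I(s) = ∫₀ˢ H(ℓ(ξ)) dξ and H is the mean curvature of the level hypersurfaces of U oriented by ∇U/‖∇U‖. -/

import Mathlib

/-!
Along the unit gradient flow, `d/ds U(ℓ s) = ‖∇U(ℓ s)‖` and `d/ds ‖∇U(ℓ s)‖ = ⟪D²U ν, ν⟫` with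
`ν = ∇U / ‖∇U‖`. As `U` is harmonic, the trace of `D²U` vanishes, so the normal second derivative
`⟪D²U ν, ν⟫` is minus the sum of the tangential ones, i.e. `(n - 1) H ‖∇U‖`. Hence
`log ‖∇U(ℓ s)‖` has derivative `(n - 1) H(ℓ s)`, which integrates to the gradient growth formula
`‖∇U(ℓ s)‖ = ‖∇U(p₀)‖ exp((n - 1) I(s))`; integrating `d/ds U(ℓ s)` over `[0, T]` finishes.
-/

open scoped InnerProductSpace

/-- The Hessian quadratic form of `f` at `p` evaluated at `(v, v)`
(the second directional derivative of `f` at `p` along `v`). -/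
noncomputable def hessQF {n : ℕ} (f : EuclideanSpace ℝ (Fin n) → ℝ)
    (p v : EuclideanSpace ℝ (Fin n)) : ℝ :=
  ⟪fderiv ℝ (gradient f) p v, v⟫_ℝ

/-- The Laplacian of `f` at `p`. -/
noncomputable def lap {n : ℕ} (f : EuclideanSpace ℝ (Fin n) → ℝ)
    (p : EuclideanSpace ℝ (Fin n)) : ℝ :=
  ∑ i : Fin n,
    ⟪fderiv ℝ (gradient f) p (EuclideanSpace.single i 1), EuclideanSpace.single i (1:ℝ)⟫_ℝ

open Module Set

section LinearAlgebra

variable {E : Type*} [NormedAddCommGroup E] [InnerProductSpace ℝ E]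

lemma orthonormal_sumElim_const {ι : Type*} {b : ι → E} (hb : Orthonormal ℝ b) {v : E}
    (hv : ‖v‖ = 1) (hbv : ∀ i, ⟪b i, v⟫_ℝ = 0) :
    Orthonormal ℝ (Sum.elim b fun _ : Unit => v) := by
  classical
  rw [orthonormal_iff_ite] at hb ⊢
  rintro (i | _) (j | _)
  · simpa using hb i j
  · simpa using hbv i
  · simpa [real_inner_comm] using hbv j
  · simp [hv]

lemma trace_eq_sum_inner_add_inner [FiniteDimensional ℝ E] {m : ℕ} (hm : finrank ℝ E = m + 1)
    (A : E →ₗ[ℝ] E) {b : Fin m → E} (hb : Orthonormal ℝ b) {v : E} (hv : ‖v‖ = 1)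
    (hbv : ∀ i, ⟪b i, v⟫_ℝ = 0) :
    LinearMap.trace ℝ E A = ∑ i, ⟪A (b i), b i⟫_ℝ + ⟪A v, v⟫_ℝ := by
  have hon := orthonormal_sumElim_const hb hv hbv
  have hcard : Fintype.card (Fin m ⊕ Unit) = finrank ℝ E := by simp [hm]
  let B := (basisOfOrthonormalOfCardEqFinrank hon hcard).toOrthonormalBasis (by simpa using hon)
  have hB : ⇑B = Sum.elim b fun _ => v := by simp [B]
  simp [LinearMap.trace_eq_sum_inner A B, hB, Fintype.sum_sum_type, real_inner_comm]

lemma exists_orthonormal_forall_inner_eq_zero [FiniteDimensional ℝ E] {m : ℕ}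
    (hm : finrank ℝ E = m + 1) {v : E} (hv : v ≠ 0) :
    ∃ b : Fin m → E, Orthonormal ℝ b ∧ ∀ i, ⟪b i, v⟫_ℝ = 0 := by
  have : Fact (finrank ℝ E = m + 1) := ⟨hm⟩
  let B := OrthonormalBasis.fromOrthogonalSpanSingleton (𝕜 := ℝ) m hv
  refine ⟨fun i => B i, ?_, fun i => Submodule.mem_orthogonal_singleton_iff_inner_left.mp (B i).2⟩
  exact B.orthonormal.comp_linearIsometry (ℝ ∙ v)ᗮ.subtypeₗᵢ

end LinearAlgebra

lemma lap_eq_trace {n : ℕ} (f : EuclideanSpace ℝ (Fin n) → ℝ) (p : EuclideanSpace ℝ (Fin n)) :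
    lap f p = LinearMap.trace ℝ _
      (fderiv ℝ (gradient f) p : EuclideanSpace ℝ (Fin n) →ₗ[ℝ] EuclideanSpace ℝ (Fin n)) := by
  simp [lap, LinearMap.trace_eq_sum_inner _ (EuclideanSpace.basisFun (Fin n) ℝ), real_inner_comm]

lemma hessQF_eq_of_lap_eq_zero {n : ℕ} (hn : 2 ≤ n) {f : EuclideanSpace ℝ (Fin n) → ℝ}
    {p v : EuclideanSpace ℝ (Fin n)} (hlap : lap f p = 0) (hv : ‖v‖ = 1) {κ c : ℝ} (hc : c ≠ 0)
    (hκ : ∀ b : Fin (n - 1) → EuclideanSpace ℝ (Fin n), Orthonormal ℝ b →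
      (∀ i, ⟪b i, v⟫_ℝ = 0) → κ = (∑ i, -(hessQF f p (b i)) / c) / (n - 1)) :
    hessQF f p v = (n - 1) * κ * c := by
  have hm : finrank ℝ (EuclideanSpace ℝ (Fin n)) = (n - 1) + 1 := by
    rw [finrank_euclideanSpace_fin]; omega
  have hv0 : v ≠ 0 := by rintro rfl; simp at hv
  obtain ⟨b, hb, hbv⟩ := exists_orthonormal_forall_inner_eq_zero hm hv0
  have htrace := trace_eq_sum_inner_add_inner hm
    (fderiv ℝ (gradient f) p : EuclideanSpace ℝ (Fin n) →ₗ[ℝ] EuclideanSpace ℝ (Fin n)) hb hv hbv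
  rw [← lap_eq_trace, hlap] at htrace
  have hn1 : ((n : ℝ) - 1) ≠ 0 := by
    have : (2 : ℝ) ≤ n := by exact_mod_cast hn
    linarith
  rw [hκ b hb hbv, ← Finset.sum_div, Finset.sum_neg_distrib]
  simp only [hessQF, ContinuousLinearMap.coe_coe] at htrace ⊢
  field_simp
  linarith

section Calculus

variable {E : Type*} [NormedAddCommGroup E] [InnerProductSpace ℝ E]

lemma HasDerivAt.norm_of_ne_zero {f : ℝ → E} {f' : E} {x : ℝ} (hf : HasDerivAt f f' x)
    (h0 : f x ≠ 0) : HasDerivAt (‖f ·‖) (⟪f x, f'⟫_ℝ / ‖f x‖) x := by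
  have hsqrt := hf.norm_sq.sqrt (by positivity)
  simp only [Real.sqrt_sq (norm_nonneg _)] at hsqrt
  convert hsqrt using 1
  field_simp

lemma ContDiffOn.gradient_of_isOpen [CompleteSpace E] {f : E → ℝ} {s : Set E} {k : WithTop ℕ∞}
    (hf : ContDiffOn ℝ (k + 1) f s) (hs : IsOpen s) : ContDiffOn ℝ k (gradient f) s :=
  (InnerProductSpace.toDual ℝ E).symm.contDiff.comp_contDiffOn (hf.fderiv_of_isOpen hs le_rfl)

lemma hasDerivAt_comp_of_hasDerivAt_unit_gradient [CompleteSpace E] {f : E → ℝ} {γ : ℝ → E}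
    {s : ℝ} (hf : DifferentiableAt ℝ f (γ s))
    (hγ : HasDerivAt γ (‖gradient f (γ s)‖⁻¹ • gradient f (γ s)) s) :
    HasDerivAt (fun t => f (γ t)) ‖gradient f (γ s)‖ s := by
  refine (hf.hasGradientAt.hasFDerivAt.comp_hasDerivAt s hγ).congr_deriv ?_
  rw [InnerProductSpace.toDual_apply_apply, real_inner_smul_right, real_inner_self_eq_norm_sq, sq,
    ← mul_assoc, inv_mul_mul_self]

lemma hasDerivAt_norm_gradient_comp [CompleteSpace E] {f : E → ℝ} {γ : ℝ → E} {s : ℝ}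
    (hf : DifferentiableAt ℝ (gradient f) (γ s)) (h0 : gradient f (γ s) ≠ 0)
    (hγ : HasDerivAt γ (‖gradient f (γ s)‖⁻¹ • gradient f (γ s)) s) :
    HasDerivAt (fun t => ‖gradient f (γ t)‖)
      ⟪fderiv ℝ (gradient f) (γ s) (‖gradient f (γ s)‖⁻¹ • gradient f (γ s)),
        ‖gradient f (γ s)‖⁻¹ • gradient f (γ s)⟫_ℝ s := by
  refine ((hf.hasFDerivAt.comp_hasDerivAt s hγ).norm_of_ne_zero h0).congr_deriv ?_
  rw [Function.comp_apply, real_inner_comm, real_inner_smul_right, inv_mul_eq_div]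

lemma integral_norm_gradient_comp_eq_sub [CompleteSpace E] {f : E → ℝ} {Ω : Set E}
    (hΩ : IsOpen Ω) (hf : ContDiffOn ℝ 1 f Ω) {γ : ℝ → E} {a b : ℝ} (hab : a ≤ b)
    (hγ : ∀ s ∈ Icc a b, γ s ∈ Ω ∧
      HasDerivAt γ (‖gradient f (γ s)‖⁻¹ • gradient f (γ s)) s) :
    ∫ s in a..b, ‖gradient f (γ s)‖ = f (γ b) - f (γ a) := by
  rw [← uIcc_of_le hab] at hγ
  have hmem : MapsTo γ (uIcc a b) Ω := fun s hs => (hγ s hs).1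
  have hγcont : ContinuousOn γ (uIcc a b) := fun s hs =>
    (hγ s hs).2.continuousAt.continuousWithinAt
  have hgrad : ContinuousOn (gradient f) Ω :=
    (hf.gradient_of_isOpen (k := 0) hΩ).continuousOn
  refine intervalIntegral.integral_eq_sub_of_hasDerivAt (f := fun s => f (γ s))
    (fun s hs => ?_) (hgrad.comp hγcont hmem).norm.intervalIntegrable
  exact hasDerivAt_comp_of_hasDerivAt_unit_gradient
    ((hf.contDiffAt (hΩ.mem_nhds (hmem hs))).differentiableAt one_ne_zero) (hγ s hs).2

end Calculus

lemma eq_mul_exp_integral_of_hasDerivAt {g r : ℝ → ℝ} {a b : ℝ}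
    (hpos : ∀ t ∈ Icc a b, 0 < g t) (hg : ∀ t ∈ Icc a b, HasDerivAt g (r t * g t) t)
    (hr : ContinuousOn r (Icc a b)) {s : ℝ} (hs : s ∈ Icc a b) :
    g s = g a * Real.exp (∫ t in a..s, r t) := by
  have hsub : uIcc a s ⊆ Icc a b := by
    rw [uIcc_of_le hs.1]; exact Icc_subset_Icc_right hs.2
  have hlog : ∀ t ∈ uIcc a s, HasDerivAt (fun t => Real.log (g t)) (r t) t := fun t ht => by
    convert (hg t (hsub ht)).log (hpos t (hsub ht)).ne' using 1
    field_simp [(hpos t (hsub ht)).ne']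
  rw [intervalIntegral.integral_eq_sub_of_hasDerivAt hlog ((hr.mono hsub).intervalIntegrable),
    Real.exp_sub, Real.exp_log (hpos a ⟨le_rfl, hs.1.trans hs.2⟩), Real.exp_log (hpos s hs)]
  field_simp [(hpos a ⟨le_rfl, hs.1.trans hs.2⟩).ne']

section HarmonicGradientFlow

variable {n : ℕ} {Ω : Set (EuclideanSpace ℝ (Fin n))} {U H : EuclideanSpace ℝ (Fin n) → ℝ}

def IsLevelSetMeanCurvature (Ω : Set (EuclideanSpace ℝ (Fin n)))
    (U H : EuclideanSpace ℝ (Fin n) → ℝ) : Prop :=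
  ∀ p ∈ Ω, ∀ b : Fin (n - 1) → EuclideanSpace ℝ (Fin n), Orthonormal ℝ b →
    (∀ i, ⟪b i, ‖gradient U p‖⁻¹ • gradient U p⟫_ℝ = 0) →
    H p = (∑ i, -(hessQF U p (b i)) / ‖gradient U p‖) / (n - 1)

lemma hessQF_unit_gradient_eq (hn : 2 ≤ n) (hgrad : ∀ p ∈ Ω, gradient U p ≠ 0)
    (hharm : ∀ p ∈ Ω, lap U p = 0)
    (hH : IsLevelSetMeanCurvature Ω U H)
    {p : EuclideanSpace ℝ (Fin n)} (hp : p ∈ Ω) :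
    hessQF U p (‖gradient U p‖⁻¹ • gradient U p) = (n - 1) * H p * ‖gradient U p‖ :=
  hessQF_eq_of_lap_eq_zero hn (hharm p hp) (norm_smul_inv_norm (hgrad p hp))
    (norm_ne_zero_iff.mpr (hgrad p hp)) (hH p hp)

lemma continuousOn_meanCurvature (hn : 2 ≤ n) (hΩ : IsOpen Ω) (hU : ContDiffOn ℝ 2 U Ω)
    (hgrad : ∀ p ∈ Ω, gradient U p ≠ 0) (hharm : ∀ p ∈ Ω, lap U p = 0)
    (hH : IsLevelSetMeanCurvature Ω U H) :
    ContinuousOn H Ω := by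
  have hG : ContDiffOn ℝ 1 (gradient U) Ω := hU.gradient_of_isOpen hΩ
  have hnorm : ContinuousOn (fun p => ‖gradient U p‖) Ω := hG.continuousOn.norm
  have hν : ContinuousOn (fun p => ‖gradient U p‖⁻¹ • gradient U p) Ω :=
    (hnorm.inv₀ fun p hp => norm_ne_zero_iff.mpr (hgrad p hp)).smul hG.continuousOn
  have hn1 : ((n : ℝ) - 1) ≠ 0 := by
    have : (2 : ℝ) ≤ n := by exact_mod_cast hn
    linarith
  refine ContinuousOn.congr (f := fun p =>
      hessQF U p (‖gradient U p‖⁻¹ • gradient U p) / ((n - 1) * ‖gradient U p‖)) ?_ fun p hp => ?_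
  · refine (((hG.continuousOn_fderiv_of_isOpen hΩ le_rfl).clm_apply hν).inner hν).div
      (continuousOn_const.mul hnorm) fun p hp => ?_
    exact mul_ne_zero hn1 (norm_ne_zero_iff.mpr (hgrad p hp))
  · simp only [hessQF_unit_gradient_eq hn hgrad hharm hH hp]
    field_simp [norm_ne_zero_iff.mpr (hgrad p hp)]

theorem norm_gradient_comp_eq_mul_exp (hn : 2 ≤ n) (hΩ : IsOpen Ω) (hU : ContDiffOn ℝ 2 U Ω)
    (hgrad : ∀ p ∈ Ω, gradient U p ≠ 0) (hharm : ∀ p ∈ Ω, lap U p = 0)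
    (hH : IsLevelSetMeanCurvature Ω U H) {ℓ : ℝ → EuclideanSpace ℝ (Fin n)} {T : ℝ}
    (hℓ : ∀ s ∈ Icc 0 T, ℓ s ∈ Ω ∧
      HasDerivAt ℓ (‖gradient U (ℓ s)‖⁻¹ • gradient U (ℓ s)) s)
    {s : ℝ} (hs : s ∈ Icc 0 T) :
    ‖gradient U (ℓ s)‖ =
      ‖gradient U (ℓ 0)‖ * Real.exp ((n - 1) * ∫ ξ in (0:ℝ)..s, H (ℓ ξ)) := by
  have hmem : MapsTo ℓ (Icc 0 T) Ω := fun t ht => (hℓ t ht).1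
  have hℓcont : ContinuousOn ℓ (Icc 0 T) := fun t ht =>
    (hℓ t ht).2.continuousAt.continuousWithinAt
  have hG : ContDiffOn ℝ 1 (gradient U) Ω := hU.gradient_of_isOpen hΩ
  rw [← intervalIntegral.integral_const_mul]
  refine eq_mul_exp_integral_of_hasDerivAt (fun t ht => norm_pos_iff.mpr (hgrad _ (hmem ht)))
    (fun t ht => ?_) (continuousOn_const.mul
      ((continuousOn_meanCurvature hn hΩ hU hgrad hharm hH).comp hℓcont hmem)) hs
  have hdiff : DifferentiableAt ℝ (gradient U) (ℓ t) :=
    (hG.contDiffAt (hΩ.mem_nhds (hmem ht))).differentiableAt one_ne_zero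
  exact (hasDerivAt_norm_gradient_comp hdiff (hgrad _ (hmem ht)) (hℓ t ht).2).congr_deriv
    (hessQF_unit_gradient_eq hn hgrad hharm hH (hmem ht))

end HarmonicGradientFlow

theorem stmt16 {n : ℕ} (hn : 2 ≤ n)
    {Ω : Set (EuclideanSpace ℝ (Fin n))} (hΩ : IsOpen Ω)
    (U : EuclideanSpace ℝ (Fin n) → ℝ) (hU : ContDiffOn ℝ 2 U Ω)
    (hgrad : ∀ p ∈ Ω, gradient U p ≠ 0)
    (hharm : ∀ p ∈ Ω, lap U p = 0)
    (N : EuclideanSpace ℝ (Fin n) → EuclideanSpace ℝ (Fin n))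
    (hN : ∀ p ∈ Ω, N p = ‖gradient U p‖⁻¹ • gradient U p)
    (H : EuclideanSpace ℝ (Fin n) → ℝ)
    -- H(p) is the mean curvature of the level set {U = U(p)} at p: the average over
    -- unit tangent vectors v of −D²_v U(p)/‖∇U(p)‖
    (hH : ∀ p ∈ Ω, ∀ b : Fin (n - 1) → EuclideanSpace ℝ (Fin n),
      Orthonormal ℝ b → (∀ i, ⟪b i, N p⟫_ℝ = 0) →
      H p = (∑ i, -(hessQF U p (b i)) / ‖gradient U p‖) / (n - 1))
    (T : ℝ) (hT : 0 < T)
    (ℓ : ℝ → EuclideanSpace ℝ (Fin n))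
    (hℓ : ∀ s ∈ Set.Icc 0 T, ℓ s ∈ Ω ∧ HasDerivAt ℓ (N (ℓ s)) s) :
    U (ℓ T) = U (ℓ 0) + ‖gradient U (ℓ 0)‖ *
      ∫ s in (0:ℝ)..T, Real.exp ((n - 1) * ∫ ξ in (0:ℝ)..s, H (ℓ ξ)) := by
  have hH' : IsLevelSetMeanCurvature Ω U H := fun p hp => hN p hp ▸ hH p hp
  have hℓ' : ∀ s ∈ Icc 0 T, ℓ s ∈ Ω ∧
      HasDerivAt ℓ (‖gradient U (ℓ s)‖⁻¹ • gradient U (ℓ s)) s := fun s hs =>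
    hN _ (hℓ s hs).1 ▸ hℓ s hs
  have hgrowth : ∀ s ∈ uIcc 0 T, ‖gradient U (ℓ s)‖ =
      ‖gradient U (ℓ 0)‖ * Real.exp ((n - 1) * ∫ ξ in (0:ℝ)..s, H (ℓ ξ)) := fun s hs =>
    norm_gradient_comp_eq_mul_exp hn hΩ hU hgrad hharm hH' hℓ' (uIcc_of_le hT.le ▸ hs)
  rw [← intervalIntegral.integral_const_mul, ← intervalIntegral.integral_congr hgrowth,
    integral_norm_gradient_comp_eq_sub hΩ (hU.of_le (by norm_num)) hT.le hℓ']
  ring
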